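/- arXiv:math/0604144 — 5 statements merged into one kernel-verified Lean document; each statement's English description precedes it below -/
import Mathlib

section
/- If the set of positive integers is covered by finitely many subsets T_1, ..., T_M, then there exists an index k and positive integers n, m (not necessarily distinct) such that n, m, and n+m all belong to T_k. -/
/-- Schur's theorem corollary: if the positive integers are covered by finitely
many subsets, one subset contains `n`, `m` and `n + m`. -/
theorem schur_corollary (M : ℕ) (T : Fin M → Set ℕ+)
    (hcover : ∀ n : ℕ+, ∃ k : Fin M, n ∈ T k) :
    ∃ (k : Fin M) (n m : ℕ+), n ∈ T k ∧ m ∈ T k ∧ n + m ∈ T k := by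
  obtain ⟨c, ⟨k, rfl⟩, a, ha⟩ := Hindman.exists_FS_of_finite_cover (Set.range T)
    (Set.finite_range T) (fun n _ => by
      obtain ⟨k, hk⟩ := hcover n
      exact ⟨T k, ⟨k, rfl⟩, hk⟩)
  exact ⟨k, a.get 0, a.get 1, ha (Hindman.FS.singleton a 0), ha (Hindman.FS.singleton a 1),
    ha (Hindman.FS.add_two a 0 1 Nat.zero_lt_one)⟩
end

section
/- Let (a_n) be a superadditive sequence of integers with a_n ≤ C·n for some constant C, and let t = lim a_n/n. If t = p/q with p, q integers, q ≥ 1, and a_q = p, then a_n ≥ ⌊n·t⌋ for all n ≥ 1, provided also a_r ≥ ⌊r·t⌋ for all 1 ≤ r < q. -/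
open Filter

/-- If a superadditive integer sequence has limit `t = p/q`, `a q = p`, and
`a r ≥ ⌊r * t⌋` for `1 ≤ r < q`, then `a n ≥ ⌊n * t⌋` for all `n ≥ 1`. -/
theorem superadditive_floor_lower_bound (a : ℕ → ℤ)
    (hsuper : ∀ n m : ℕ, 1 ≤ n → 1 ≤ m → a n + a m ≤ a (n + m))
    (C : ℤ) (hbound : ∀ n : ℕ, 1 ≤ n → a n ≤ C * n)
    (t : ℝ) (hlim : Tendsto (fun n : ℕ => (a n : ℝ) / n) atTop (nhds t))
    (p : ℤ) (q : ℕ) (hq : 1 ≤ q) (ht : t = (p : ℝ) / q) (haq : a q = p)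
    (hsmall : ∀ r : ℕ, 1 ≤ r → r < q → ⌊(r : ℝ) * t⌋ ≤ a r) :
    ∀ n : ℕ, 1 ≤ n → ⌊(n : ℝ) * t⌋ ≤ a n := by
  have hq0 : (q : ℝ) ≠ 0 := by positivity
  -- a (k*q) ≥ k * a q for k ≥ 1
  have hmul : ∀ k : ℕ, 1 ≤ k → (k : ℤ) * a q ≤ a (k * q) := by
    intro k hk
    induction k with
    | zero => omega
    | succ m ih =>
      rcases Nat.eq_zero_or_pos m with hm0 | hm
      · subst hm0; simp
      · have ihm := ih hm
        have hmq : 1 ≤ m * q := Nat.mul_pos hm (by omega)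
        have hsum := hsuper (m * q) q hmq hq
        have step : ((m : ℤ) + 1) * a q ≤ a (m * q) + a q := by
          rw [add_mul, one_mul]; omega
        calc ((m + 1 : ℕ) : ℤ) * a q = ((m : ℤ) + 1) * a q := by push_cast; ring
          _ ≤ a (m * q) + a q := step
          _ ≤ a (m * q + q) := hsum
          _ = a ((m + 1) * q) := by ring_nf
  -- key: (k*q : ℝ) * t = k*p
  have hkey : ∀ k : ℕ, ((k * q : ℕ) : ℝ) * t = ((k : ℤ) * p : ℤ) := by
    intro k
    rw [ht]
    push_cast
    field_simp
  intro n hn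
  set k := n / q with hkdef
  set r := n % q with hrdef
  have hnkr : n = k * q + r := by
    rw [hkdef, hrdef, Nat.mul_comm]; exact (Nat.div_add_mod n q).symm
  have hr : r < q := Nat.mod_lt _ (by omega)
  rcases Nat.eq_zero_or_pos r with hr0 | hr1
  · -- n = k*q, k ≥ 1
    have hk1 : 1 ≤ k := by
      rcases Nat.eq_zero_or_pos k with h | h
      · rw [h] at hnkr; simp at hnkr; omega
      · exact h
    have hn' : n = k * q := by omega
    rw [hn', hkey k, Int.floor_intCast]
    calc (k : ℤ) * p = (k : ℤ) * a q := by rw [haq]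
      _ ≤ a (k * q) := hmul k hk1
  · rcases Nat.eq_zero_or_pos k with hk0 | hk1
    · -- n = r < q
      have : n = r := by rw [hk0] at hnkr; simpa using hnkr
      rw [this]
      exact hsmall r hr1 hr
    · have hfloor : ⌊(n : ℝ) * t⌋ = (k : ℤ) * p + ⌊(r : ℝ) * t⌋ := by
        have : (n : ℝ) * t = ((k : ℤ) * p : ℤ) + (r : ℝ) * t := by
          rw [← hkey k]
          rw [hnkr]
          push_cast
          ring
        rw [this, add_comm, Int.floor_add_intCast, add_comm]
      rw [hfloor]
      have h1 := hmul k hk1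
      have h2 := hsmall r hr1 hr
      have h3 := hsuper (k * q) r (Nat.mul_pos hk1 (by omega)) hr1
      rw [← hnkr] at h3
      rw [haq] at h1
      omega
end

section
/- Let (a_n) be a superadditive sequence of integers bounded above by C·n, let t = lim a_n/n, and suppose t = p/q with p, q integers and 1 ≤ q ≤ N for a fixed positive integer N. If a_n ≤ t·n < a_n + 1 for all n ≥ 1, then t = max{ a_k / k : 1 ≤ k ≤ N }. -/
open Filter

/-- If `a` is superadditive with limit `t = p/q`, `1 ≤ q ≤ N`, and
`a n = ⌊n*t⌋` for all `n ≥ 1`, then `t = max { a k / k : 1 ≤ k ≤ N }`. -/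
theorem limit_eq_max (a : ℕ → ℤ)
    (hsuper : ∀ n m : ℕ, 1 ≤ n → 1 ≤ m → a n + a m ≤ a (n + m))
    (C : ℤ) (hbound : ∀ n : ℕ, 1 ≤ n → a n ≤ C * n)
    (N : ℕ) (hN : 1 ≤ N) (t : ℚ) (p q : ℤ) (hq1 : 1 ≤ q) (hqN : q ≤ (N : ℤ))
    (ht : t = p / q)
    (hlim : Tendsto (fun n : ℕ => (a n : ℝ) / n) atTop (nhds (t : ℝ)))
    (hfloor : ∀ n : ℕ, 1 ≤ n → (a n : ℚ) ≤ t * n ∧ t * n < a n + 1) :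
    t = (Finset.Icc 1 N).sup' (Finset.nonempty_Icc.2 hN)
      (fun k => (a k : ℚ) / k) := by
  have hq0 : (0:ℤ) < q := hq1
  have hqQ : (q.toNat : ℚ) = (q : ℚ) := by
    exact_mod_cast congrArg (Int.cast : ℤ → ℚ) (Int.toNat_of_nonneg hq0.le)
  have hqne : (q:ℚ) ≠ 0 := by positivity
  have hq1n : 1 ≤ q.toNat := by omega
  have hqNn : q.toNat ≤ N := by omega
  have hmem : q.toNat ∈ Finset.Icc 1 N := Finset.mem_Icc.2 ⟨hq1n, hqNn⟩
  have htq : t * (q.toNat : ℚ) = (p : ℚ) := by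
    rw [hqQ, ht]; field_simp
  have haq : a q.toNat = p := by
    obtain ⟨h1, h2⟩ := hfloor q.toNat hq1n
    rw [htq] at h1 h2
    have h1' : (a q.toNat : ℤ) ≤ p := by exact_mod_cast h1
    have h2' : (p : ℤ) < a q.toNat + 1 := by exact_mod_cast h2
    omega
  apply le_antisymm
  · have hval : (a q.toNat : ℚ) / (q.toNat : ℚ) = t := by
      rw [haq, hqQ, ht]
    calc t = (a q.toNat : ℚ) / (q.toNat : ℚ) := hval.symm
    _ ≤ _ := Finset.le_sup' (fun k => (a k : ℚ) / k) hmem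
  · apply Finset.sup'_le
    intro k hk
    obtain ⟨hk1, _⟩ := Finset.mem_Icc.1 hk
    have hkpos : (0:ℚ) < (k:ℚ) := by exact_mod_cast hk1
    rw [div_le_iff₀ hkpos]
    have := (hfloor k hk1).1
    linarith [this]
end

section
/- In the group G = ⟨x, y | x^N = y^N⟩ with N ≥ 2, the element g = x^{N-1} satisfies: the supremum of integers r with Δ^r dividing g^k on the left (where Δ = x^N) equals ⌊k(N-1)/N⌋ for every k ≥ 1; consequently lim_{k→∞} inf(g^k)/k = 1 - 1/N. -/
open Filter

/-- The single relation `x^N = y^N` on two generators. -/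
def torusRel (N : ℕ) : Set (FreeGroup Bool) :=
  {FreeGroup.of true ^ N * (FreeGroup.of false ^ N)⁻¹}

/-- The generator `x` of `⟨x, y | x^N = y^N⟩`. -/
def torusX (N : ℕ) : PresentedGroup (torusRel N) := PresentedGroup.of true

/-- The generator `y` of `⟨x, y | x^N = y^N⟩`. -/
def torusY (N : ℕ) : PresentedGroup (torusRel N) := PresentedGroup.of false

lemma torusRel_lift (N : ℕ) :
    ∀ r ∈ torusRel N, FreeGroup.lift (fun _ : Bool => Multiplicative.ofAdd (1 : ℤ)) r = 1 := by
  intro r hr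
  rcases hr with rfl
  simp

/-- The exponent-sum homomorphism `G → ℤ`, `x, y ↦ 1`. -/
noncomputable def torusPhi (N : ℕ) : PresentedGroup (torusRel N) →* Multiplicative ℤ :=
  PresentedGroup.toGroup (torusRel_lift N)

lemma torusPhi_x (N : ℕ) : torusPhi N (torusX N) = Multiplicative.ofAdd (1 : ℤ) :=
  PresentedGroup.toGroup.of _

lemma torusPhi_y (N : ℕ) : torusPhi N (torusY N) = Multiplicative.ofAdd (1 : ℤ) :=
  PresentedGroup.toGroup.of _

lemma torusPhi_nonneg (N : ℕ) {c : PresentedGroup (torusRel N)}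
    (hc : c ∈ Submonoid.closure ({torusX N, torusY N} :
      Set (PresentedGroup (torusRel N)))) :
    0 ≤ Multiplicative.toAdd (torusPhi N c) := by
  induction hc using Submonoid.closure_induction with
  | mem z hz =>
    rcases hz with rfl | rfl
    · rw [torusPhi_x]; simp
    · rw [torusPhi_y]; simp
  | one => simp
  | mul a b _ _ ha hb =>
    rw [map_mul, toAdd_mul]
    omega

/-- In `G = ⟨x, y | x^N = y^N⟩` with `N ≥ 2`, `Δ = x^N` and `g = x^{N-1}`,
the largest `r` with `Δ^r` left-dividing `g^k` (in the monoid generated by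
`x, y`) is `⌊k(N-1)/N⌋`, and hence `inf(g^k)/k → 1 - 1/N`. -/
theorem torus_group_inf (N : ℕ) (hN : 2 ≤ N) :
    (∀ k : ℕ, 1 ≤ k →
      IsGreatest {r : ℤ | ∃ c ∈ Submonoid.closure ({torusX N, torusY N} :
          Set (PresentedGroup (torusRel N))),
          (torusX N ^ (N - 1)) ^ k = (torusX N ^ N) ^ r * c}
        ((k * (N - 1) / N : ℕ) : ℤ)) ∧
    Tendsto (fun k : ℕ => ((k * (N - 1) / N : ℕ) : ℝ) / k) atTop
      (nhds (1 - 1 / N)) := by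
  have hN0 : 0 < N := by omega
  have hNR : (N : ℝ) ≠ 0 := by positivity
  constructor
  · intro k hk
    constructor
    · -- membership: c = x ^ (k*(N-1) % N)
      refine ⟨torusX N ^ (k * (N - 1) % N), ?_, ?_⟩
      · exact pow_mem (Submonoid.subset_closure (by simp)) _
      · rw [← pow_mul, zpow_natCast, ← pow_mul, ← pow_add]
        congr 1
        rw [Nat.div_add_mod]
        ring
    · -- upper bound
      rintro r ⟨c, hc, heq⟩
      have h1 : Multiplicative.toAdd (torusPhi N ((torusX N ^ (N - 1)) ^ k)) =
          (k * (N - 1) : ℕ) := by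
        simp only [map_pow, torusPhi_x, toAdd_pow, toAdd_ofAdd, smul_eq_mul, mul_one,
          nsmul_eq_mul]
        norm_cast
      have h2 : Multiplicative.toAdd (torusPhi N ((torusX N ^ N) ^ r * c)) =
          r * N + Multiplicative.toAdd (torusPhi N c) := by
        simp only [map_mul, map_zpow, map_pow, torusPhi_x, toAdd_mul, toAdd_zpow,
          toAdd_pow, toAdd_ofAdd, smul_eq_mul, mul_one, nsmul_eq_mul, zsmul_eq_mul]
      have hkey : ((k * (N - 1) : ℕ) : ℤ) = r * N + Multiplicative.toAdd (torusPhi N c) := by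
        rw [← h1, heq, h2]
      have hd := torusPhi_nonneg N hc
      have hle : r * (N : ℤ) ≤ ((k * (N - 1) : ℕ) : ℤ) := by omega
      rw [Int.natCast_div]
      exact (Int.le_ediv_iff_mul_le (by exact_mod_cast hN0)).mpr hle
  · -- limit
    have heq : ∀ k : ℕ, 1 ≤ k →
        ((k * (N - 1) / N : ℕ) : ℝ) / k =
          (1 - 1 / N) - ((k * (N - 1) % N : ℕ) : ℝ) / (N * k) := by
      intro k hk
      have hkR : (k : ℝ) ≠ 0 := by positivity
      have hdm := Nat.div_add_mod (k * (N - 1)) N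
      have hcast : (N : ℝ) * ((k * (N - 1) / N : ℕ) : ℝ) + ((k * (N - 1) % N : ℕ) : ℝ)
          = (k : ℝ) * ((N : ℝ) - 1) := by
        have h := congrArg (Nat.cast : ℕ → ℝ) hdm
        push_cast [Nat.cast_sub (by omega : 1 ≤ N)] at h
        linarith
      have hq : ((k * (N - 1) / N : ℕ) : ℝ) =
          ((k : ℝ) * ((N : ℝ) - 1) - ((k * (N - 1) % N : ℕ) : ℝ)) / N := by
        field_simp
        linarith [hcast]
      rw [hq]
      field_simp
    have hbound : Tendsto (fun k : ℕ => ((k * (N - 1) % N : ℕ) : ℝ) / (N * k)) atTop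
        (nhds 0) := by
      apply squeeze_zero (fun k => by positivity) (g := fun k : ℕ => 1 / (k : ℝ))
      · intro k
        rcases Nat.eq_zero_or_pos k with rfl | hk
        · simp
        · have hkR : (0 : ℝ) < k := by exact_mod_cast hk
          have h1 : ((k * (N - 1) % N : ℕ) : ℝ) ≤ (N : ℝ) := by
            exact_mod_cast (Nat.mod_lt _ hN0).le
          calc ((k * (N - 1) % N : ℕ) : ℝ) / (N * k) ≤ (N : ℝ) / (N * k) := by
                gcongr
            _ = 1 / k := by
                field_simp
      · exact tendsto_one_div_atTop_nhds_zero_nat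
    have : Tendsto (fun k : ℕ => (1 - 1 / (N : ℝ)) -
        ((k * (N - 1) % N : ℕ) : ℝ) / (N * k)) atTop (nhds (1 - 1 / N)) := by
      simpa using tendsto_const_nhds.sub hbound
    refine this.congr' ?_
    filter_upwards [eventually_ge_atTop 1] with k hk
    exact (heq k hk).symm
end

section
/- Let t be a real number and (a_n) an integer sequence with a_n = ⌊n·t⌋ for all n ≥ 1. If (b_n) is another integer sequence with b_n ≤ a_n for all n, b_{n+m} ≥ b_n + b_m for all n, m, and b_n = a_n for all 1 ≤ n ≤ q where t = p/q in lowest terms with q ≥ 1, then b_n = a_n for all n ≥ 1. -/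
/-- Stable super summit abstraction: if `a n = ⌊n*t⌋`, `b` is superadditive
with `b n ≤ a n`, `t = p/q` in lowest terms, and `b n = a n` for `1 ≤ n ≤ q`,
then `b n = a n` for all `n ≥ 1`. -/
theorem stable_sss_finite_check (t : ℝ) (a b : ℕ → ℤ)
    (ha : ∀ n : ℕ, 1 ≤ n → a n = ⌊(n : ℝ) * t⌋)
    (hba : ∀ n : ℕ, 1 ≤ n → b n ≤ a n)
    (hsuper : ∀ n m : ℕ, 1 ≤ n → 1 ≤ m → b n + b m ≤ b (n + m))
    (p : ℤ) (q : ℕ) (hq : 1 ≤ q) (ht : t = (p : ℝ) / q)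
    (hcop : Nat.Coprime p.natAbs q)
    (hinit : ∀ n : ℕ, 1 ≤ n → n ≤ q → b n = a n) :
    ∀ n : ℕ, 1 ≤ n → b n = a n := by
  have hq0 : (q : ℝ) ≠ 0 := by
    exact_mod_cast Nat.one_le_iff_ne_zero.mp hq
  have hqt : (q : ℝ) * t = (p : ℝ) := by
    rw [ht]; field_simp
  have hbq : b q = p := by
    rw [hinit q hq le_rfl, ha q hq, hqt, Int.floor_intCast]
  intro n hn
  obtain ⟨k, r, hr1, hrq, hnkr⟩ : ∃ k r, 1 ≤ r ∧ r ≤ q ∧ n = k * q + r := by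
    refine ⟨(n - 1) / q, (n - 1) % q + 1, le_add_self, ?_, ?_⟩
    · have := Nat.mod_lt (n - 1) (by omega : 0 < q); omega
    · have := Nat.div_add_mod' (n - 1) q; omega
  have key : ∀ k : ℕ, (k : ℤ) * p + b r ≤ b (k * q + r) := by
    intro k
    induction k with
    | zero => simp
    | succ k ih =>
      have h1 : b q + b (k * q + r) ≤ b (q + (k * q + r)) :=
        hsuper q (k * q + r) hq (by omega)
      have h2 : (k + 1) * q + r = q + (k * q + r) := by ring
      rw [h2]
      push_cast
      calc ((k : ℤ) + 1) * p + b r = p + ((k : ℤ) * p + b r) := by ring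
        _ ≤ p + b (k * q + r) := by linarith
        _ = b q + b (k * q + r) := by rw [hbq]
        _ ≤ _ := h1
  have han : a n = (k : ℤ) * p + a r := by
    rw [ha n hn, ha r hr1, hnkr]
    have : ((k * q + r : ℕ) : ℝ) * t = (((k : ℤ) * p : ℤ) : ℝ) + (r : ℝ) * t := by
      push_cast
      rw [add_mul, mul_assoc, hqt]
    rw [this, Int.floor_intCast_add]
  have hbr : b r = a r := hinit r hr1 hrq
  have hge : a n ≤ b n := by
    rw [han, hnkr, ← hbr]; exact key k
  exact le_antisymm (hba n hn) hge
end
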